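/- Define η(r,s) = c (1-r^2)(1-r^2 s^2)^{2-n} [(1-s)(1-sr^2)]^{n/2 - 2} s^{n/2 - 1} for 0 ≤ r < 1, 0 ≤ s ≤ 1, where c > 0 is a constant. Then for every integer k ≥ 0 there is a constant C_k such that for all r ∈ [0,1), ∫_0^1 |(r ∂/∂r)^k η(r,s)| ds ≤ C_k (1-r)^{-k}. -/

import Mathlib

/-!
Each iterate `(r ∂_r)^k η(·, s)` is `(1-s)^(n/2-2) s^(n/2-1)` times a finite sum of terms
`q r^m s^p (1-r²)^a (1-r²s²)^(2-n-i) (1-sr²)^(n/2-2-j)`: this class is closed under `r ∂_r`, and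
each application either keeps `(i, j, a)`, lowers `a`, or raises `i` or `j` by one, so after `k`
steps `i + j + 1 ≤ k + a`. With `v = (1-r²) + (1-s)`, both `1-r²s²` and `1-sr²` lie between `v/2`
and `2v`, and `1-r ≤ v`, so each term is `O((1-r)^(1-k) v^(-n/2))`. Finally, with `κ = n/2-1 > 0`
and `δ = 1-r²`, `∫₀¹ (1-s)^(κ-1) (δ+1-s)^(-κ-1) ds = (1+δ)^(-κ)/(κδ)`, which costs one more
factor `(1-r)⁻¹`.
-/

noncomputable section

open Real

/-- The radial operator r d/dr on functions of one variable. -/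
def Rad (f : ℝ → ℝ) (r : ℝ) : ℝ := r * deriv f r

/-- The kernel η(r,s) = c(1-r²)(1-r²s²)^{2-n}[(1-s)(1-sr²)]^{n/2-2} s^{n/2-1}. -/
def eta (n : ℕ) (c r s : ℝ) : ℝ :=
  c * (1 - r ^ 2) * (1 - r ^ 2 * s ^ 2) ^ (2 - (n : ℤ)) *
    ((1 - s) * (1 - s * r ^ 2)) ^ ((n : ℝ) / 2 - 2) * s ^ ((n : ℝ) / 2 - 1)

open Set Filter MeasureTheory

theorem rpow_le_rpow_abs_mul_rpow {x v l γ : ℝ} (hv : 0 < v) (hl : 1 ≤ l) (h₁ : v ≤ l * x)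
    (h₂ : x ≤ l * v) : x ^ γ ≤ l ^ |γ| * v ^ γ := by
  have hl₀ : 0 < l := by linarith
  have hx : 0 < v / l := div_pos hv hl₀
  rcases le_total 0 γ with hγ | hγ
  · calc x ^ γ ≤ (l * v) ^ γ := rpow_le_rpow (by nlinarith) h₂ hγ
      _ = l ^ |γ| * v ^ γ := by rw [mul_rpow hl₀.le hv.le, abs_of_nonneg hγ]
  · calc x ^ γ ≤ (v / l) ^ γ := rpow_le_rpow_of_nonpos hx (by rwa [div_le_iff₀' hl₀]) hγ
      _ = l ^ |γ| * v ^ γ := by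
        rw [div_rpow hv.le hl₀.le, abs_of_nonpos hγ, rpow_neg hl₀.le]
        ring

theorem pow_div_pow_le_pow_div_pow {x : ℝ} (h₀ : 0 < x) (h₁ : x ≤ 1) {a b c d : ℕ}
    (h : b + c ≤ d + a) : x ^ a / x ^ b ≤ x ^ c / x ^ d := by
  rw [div_le_div_iff₀ (pow_pos h₀ _) (pow_pos h₀ _), ← pow_add, ← pow_add]
  exact pow_le_pow_of_le_one h₀.le h₁ (by omega)

theorem hasDerivAt_rpow_div_one_sub {κ δ s : ℝ} (hκ : 0 < κ) (hδ : 0 < δ) (hs : s < 1) :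
    HasDerivAt (fun t => -((1 - t) / (δ + (1 - t))) ^ κ / (κ * δ))
      ((1 - s) ^ (κ - 1) * (δ + (1 - s)) ^ (-(κ + 1))) s := by
  have hu : 0 < 1 - s := by linarith
  have hd : 0 < δ + (1 - s) := by linarith
  have hw : HasDerivAt (fun t => (1 - t) / (δ + (1 - t))) (-δ / (δ + (1 - s)) ^ 2) s := by
    refine (((hasDerivAt_id' s).const_sub 1).div (((hasDerivAt_id' s).const_sub 1).const_add δ)
      hd.ne').congr_deriv ?_
    ring
  refine ((hw.rpow_const (p := κ) (Or.inl (div_pos hu hd).ne')).neg.div_const (κ * δ)).congr_deriv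
    ?_
  rw [div_rpow hu.le hd.le, rpow_neg hd.le, show κ + 1 = (κ - 1) + (2 : ℕ) by push_cast; ring,
    rpow_add hd, rpow_natCast]
  field_simp

theorem continuousOn_rpow_div_one_sub {κ δ : ℝ} (hκ : 0 ≤ κ) (hδ : 0 < δ) :
    ContinuousOn (fun t => -((1 - t) / (δ + (1 - t))) ^ κ / (κ * δ)) (Icc 0 1) := by
  refine ((ContinuousOn.rpow_const ?_ fun _ _ => Or.inr hκ).neg).div_const _
  exact (continuousOn_const.sub continuousOn_id).div
    (continuousOn_const.add (continuousOn_const.sub continuousOn_id)) fun s hs => by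
      linarith [hs.2]

theorem integrableOn_one_sub_rpow_mul_rpow {κ δ : ℝ} (hκ : 0 < κ) (hδ : 0 < δ) :
    IntegrableOn (fun s => (1 - s) ^ (κ - 1) * (δ + (1 - s)) ^ (-(κ + 1))) (Ioc 0 1) := by
  refine intervalIntegral.integrableOn_deriv_of_nonneg (continuousOn_rpow_div_one_sub hκ.le hδ)
    (fun s hs => hasDerivAt_rpow_div_one_sub hκ hδ hs.2) fun s hs => ?_
  have : 0 < 1 - s := by linarith [hs.2]
  positivity

theorem integral_one_sub_rpow_mul_rpow {κ δ : ℝ} (hκ : 0 < κ) (hδ : 0 < δ) :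
    ∫ s in Ioo 0 1, (1 - s) ^ (κ - 1) * (δ + (1 - s)) ^ (-(κ + 1)) = (1 + δ)⁻¹ ^ κ / (κ * δ) := by
  rw [← integral_Ioc_eq_integral_Ioo, ← intervalIntegral.integral_of_le zero_le_one,
    intervalIntegral.integral_eq_sub_of_hasDerivAt_of_le zero_le_one
      (continuousOn_rpow_div_one_sub hκ.le hδ) (fun s hs => hasDerivAt_rpow_div_one_sub hκ hδ hs.2)
      ((intervalIntegrable_iff_integrableOn_Ioc_of_le zero_le_one).2
        (integrableOn_one_sub_rpow_mul_rpow hκ hδ))]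
  simp [zero_rpow hκ.ne', add_comm, neg_div]

theorem Rad_const_mul (a : ℝ) (f : ℝ → ℝ) : Rad (fun ρ => a * f ρ) = fun r => a * Rad f r := by
  funext r
  simp only [Rad, deriv_const_mul_field']
  ring

theorem Set.EqOn.Rad {f g : ℝ → ℝ} {U : Set ℝ} (hU : IsOpen U) (h : EqOn f g U) :
    EqOn (Rad f) (Rad g) U := fun r hr => by
  simp only [_root_.Rad, (h.eventuallyEq_of_mem (hU.mem_nhds hr)).deriv_eq]

namespace EtaKernel

structure Term where
  coeff : ℝ
  m : ℕ
  p : ℕ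
  a : ℕ
  i : ℕ
  j : ℕ

variable (α β : ℝ)

def Term.eval (e : Term) (r s : ℝ) : ℝ :=
  e.coeff * r ^ e.m * s ^ e.p * (1 - r ^ 2) ^ e.a * (1 - r ^ 2 * s ^ 2) ^ (α - e.i) *
    (1 - s * r ^ 2) ^ (β - e.j)

def Term.rad (e : Term) : List Term :=
  [⟨e.coeff * e.m, e.m, e.p, e.a, e.i, e.j⟩,
   ⟨-2 * e.coeff * e.a, e.m + 2, e.p, e.a - 1, e.i, e.j⟩,
   ⟨-2 * e.coeff * (α - e.i), e.m + 2, e.p + 2, e.a, e.i + 1, e.j⟩,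
   ⟨-2 * e.coeff * (β - e.j), e.m + 2, e.p + 1, e.a, e.i, e.j + 1⟩]

def evalSum (L : List Term) (r s : ℝ) : ℝ := (L.map fun e => e.eval α β r s).sum

def radTerms (c : ℝ) : ℕ → List Term
  | 0 => [⟨c, 0, 0, 1, 0, 0⟩]
  | k + 1 => (radTerms c k).flatMap (Term.rad α β)

theorem evalSum_cons (e : Term) (L : List Term) (r s : ℝ) :
    evalSum α β (e :: L) r s = e.eval α β r s + evalSum α β L r s := by
  simp [evalSum]

theorem evalSum_append (L₁ L₂ : List Term) (r s : ℝ) :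
    evalSum α β (L₁ ++ L₂) r s = evalSum α β L₁ r s + evalSum α β L₂ r s := by
  simp [evalSum]

variable {α β}

theorem Term.exists_hasDerivAt_eval (e : Term) {r s : ℝ} (hA : 0 < 1 - r ^ 2 * s ^ 2)
    (hB : 0 < 1 - s * r ^ 2) :
    ∃ D, HasDerivAt (fun ρ => e.eval α β ρ s) D r ∧ r * D = evalSum α β (e.rad α β) r s := by
  obtain ⟨q, m, p, a, i, j⟩ := e
  have hsq : HasDerivAt (fun ρ : ℝ => ρ ^ 2) (2 * r) r := by simpa using hasDerivAt_pow 2 r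
  have hA' := ((hsq.mul_const (s ^ 2)).const_sub 1).rpow_const (p := α - i) (Or.inl hA.ne')
  have hB' := ((hsq.const_mul s).const_sub 1).rpow_const (p := β - j) (Or.inl hB.ne')
  have hX' := (hsq.const_sub 1).pow a
  have hr' := ((hasDerivAt_pow m r).const_mul q).mul_const (s ^ p)
  refine ⟨_, ((hr'.mul hX').mul hA').mul hB', ?_⟩
  simp only [evalSum, Term.rad, Term.eval, List.map, List.sum_cons, List.sum_nil]
  have hi : α - ↑(i + 1) = α - i - 1 := by push_cast; ring
  have hj : β - ↑(j + 1) = β - j - 1 := by push_cast; ring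
  rw [hi, hj]
  rcases m with _ | m
  · simp only [Pi.mul_apply, Pi.pow_apply, Nat.cast_zero]
    ring
  · simp only [Pi.mul_apply, Pi.pow_apply, Nat.add_sub_cancel]
    push_cast
    ring

theorem exists_hasDerivAt_evalSum (L : List Term) {r s : ℝ} (hA : 0 < 1 - r ^ 2 * s ^ 2)
    (hB : 0 < 1 - s * r ^ 2) :
    ∃ D, HasDerivAt (fun ρ => evalSum α β L ρ s) D r ∧
      r * D = evalSum α β (L.flatMap (Term.rad α β)) r s := by
  induction L with
  | nil => exact ⟨0, by simpa [evalSum] using hasDerivAt_const r (0 : ℝ), by simp [evalSum]⟩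
  | cons e L ih =>
    obtain ⟨D₁, hD₁, h₁⟩ := e.exists_hasDerivAt_eval hA hB
    obtain ⟨D₂, hD₂, h₂⟩ := ih
    refine ⟨D₁ + D₂, ?_, ?_⟩
    · simp only [evalSum_cons]
      exact hD₁.add hD₂
    · rw [List.flatMap_cons, evalSum_append, mul_add, h₁, h₂]

theorem Rad_evalSum (L : List Term) {r s : ℝ} (hA : 0 < 1 - r ^ 2 * s ^ 2)
    (hB : 0 < 1 - s * r ^ 2) :
    Rad (fun ρ => evalSum α β L ρ s) r = evalSum α β (L.flatMap (Term.rad α β)) r s := by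
  obtain ⟨D, hD, hrD⟩ := exists_hasDerivAt_evalSum L hA hB
  rw [Rad, hD.deriv, hrD]

theorem one_sub_pos_of_mem_Ioo_of_mem_Icc {r s : ℝ} (hr : r ∈ Ioo (-1 : ℝ) 1)
    (hs : s ∈ Icc (0 : ℝ) 1) : 0 < 1 - r ^ 2 * s ^ 2 ∧ 0 < 1 - s * r ^ 2 := by
  obtain ⟨hr₀, hr₁⟩ := hr
  obtain ⟨hs₀, hs₁⟩ := hs
  have hr2 : r ^ 2 < 1 := by nlinarith
  constructor <;> nlinarith [mul_le_mul_of_nonneg_left hs₁ (sq_nonneg r), sq_nonneg s]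

theorem eta_eq_evalSum (n : ℕ) (c : ℝ) {r s : ℝ} (hr : r ∈ Ioo (-1 : ℝ) 1)
    (hs : s ∈ Icc (0 : ℝ) 1) :
    eta n c r s = (1 - s) ^ ((n : ℝ) / 2 - 2) * s ^ ((n : ℝ) / 2 - 1) *
      evalSum (2 - n) (n / 2 - 2) (radTerms (2 - n) (n / 2 - 2) c 0) r s := by
  have hB := (one_sub_pos_of_mem_Ioo_of_mem_Icc hr hs).2
  simp only [eta, radTerms, evalSum, Term.eval, List.map, List.sum_cons, List.sum_nil]
  rw [mul_rpow (by linarith [hs.2]) hB.le, ← rpow_intCast]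
  push_cast
  simp only [sub_zero]
  ring

theorem eqOn_iterate_Rad_eta (n : ℕ) (c : ℝ) (k : ℕ) {s : ℝ} (hs : s ∈ Icc (0 : ℝ) 1) :
    EqOn (Rad^[k] fun ρ => eta n c ρ s)
      (fun ρ => (1 - s) ^ ((n : ℝ) / 2 - 2) * s ^ ((n : ℝ) / 2 - 1) *
        evalSum (2 - n) (n / 2 - 2) (radTerms (2 - n) (n / 2 - 2) c k) ρ s) (Ioo (-1) 1) := by
  induction k with
  | zero => exact fun r hr => eta_eq_evalSum n c hr hs
  | succ k ih =>
    intro r hr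
    obtain ⟨hA, hB⟩ := one_sub_pos_of_mem_Ioo_of_mem_Icc hr hs
    rw [Function.iterate_succ_apply', ih.Rad isOpen_Ioo hr, Rad_const_mul]
    dsimp only
    rw [Rad_evalSum _ hA hB]
    rfl

theorem add_one_le_of_mem_radTerms {c : ℝ} {k : ℕ} {e : Term} (he : e ∈ radTerms α β c k) :
    e.i + e.j + 1 ≤ k + e.a := by
  induction k generalizing e with
  | zero => simp only [radTerms, List.mem_singleton] at he; subst he; simp
  | succ k ih =>
    obtain ⟨e', he', hmem⟩ := List.mem_flatMap.mp he
    have he'k := ih he'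
    simp only [Term.rad, List.mem_cons, List.not_mem_nil, or_false] at hmem
    rcases hmem with rfl | rfl | rfl | rfl <;> dsimp only <;> omega

theorem Term.abs_eval_le (e : Term) {r s : ℝ} (hr₀ : 0 ≤ r) (hr₁ : r < 1) (hs₀ : 0 ≤ s)
    (hs₁ : s ≤ 1) :
    |e.eval α β r s| ≤ |e.coeff| * 2 ^ e.a * 2 ^ (|α - e.i| + |β - e.j|) *
      ((1 - r) ^ e.a / (1 - r) ^ (e.i + e.j)) * (1 - r ^ 2 + (1 - s)) ^ (α + β) := by
  obtain ⟨q, m, p, a, i, j⟩ := e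
  set v := 1 - r ^ 2 + (1 - s)
  have hr : 0 < 1 - r := by linarith
  have hv : 1 - r ≤ v := by nlinarith
  have hX : 0 ≤ 1 - r ^ 2 := by nlinarith
  obtain ⟨hA₀, hB₀⟩ := one_sub_pos_of_mem_Ioo_of_mem_Icc (r := r) ⟨by linarith, hr₁⟩ ⟨hs₀, hs₁⟩
  have hss := mul_le_mul_of_nonneg_left hs₁ hs₀
  have hrs := mul_le_mul_of_nonneg_left hs₁ (sq_nonneg r)
  have hA : (1 - r ^ 2 * s ^ 2) ^ (α - i) ≤ 2 ^ |α - i| * v ^ (α - i) :=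
    rpow_le_rpow_abs_mul_rpow (by linarith) one_le_two (by nlinarith) (by nlinarith)
  have hB : (1 - s * r ^ 2) ^ (β - j) ≤ 2 ^ |β - j| * v ^ (β - j) :=
    rpow_le_rpow_abs_mul_rpow (by linarith) one_le_two (by nlinarith) (by nlinarith)
  have hvv : v ^ (α - i) * v ^ (β - j) = v ^ (α + β) / v ^ (i + j) := by
    rw [← rpow_add (by linarith), ← rpow_natCast, ← rpow_sub (by linarith)]
    push_cast
    ring_nf
  have hrmsp : |r ^ m * s ^ p| ≤ 1 := by
    rw [abs_of_nonneg (by positivity)]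
    exact mul_le_one₀ (pow_le_one₀ hr₀ hr₁.le) (by positivity) (pow_le_one₀ hs₀ hs₁)
  have heval : (⟨q, m, p, a, i, j⟩ : Term).eval α β r s = q * (r ^ m * s ^ p) *
      ((1 - r ^ 2) ^ a * (1 - r ^ 2 * s ^ 2) ^ (α - i) * (1 - s * r ^ 2) ^ (β - j)) := by
    simp only [Term.eval]
    ring
  have hXAB : 0 ≤ (1 - r ^ 2) ^ a * (1 - r ^ 2 * s ^ 2) ^ (α - i) * (1 - s * r ^ 2) ^ (β - j) :=
    mul_nonneg (mul_nonneg (pow_nonneg hX a) (rpow_nonneg hA₀.le _)) (rpow_nonneg hB₀.le _)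
  rw [heval, abs_mul, abs_mul, abs_of_nonneg hXAB]
  calc |q| * |r ^ m * s ^ p| *
        ((1 - r ^ 2) ^ a * (1 - r ^ 2 * s ^ 2) ^ (α - i) * (1 - s * r ^ 2) ^ (β - j))
      ≤ |q| * 1 * ((2 * (1 - r)) ^ a * (2 ^ |α - i| * v ^ (α - i)) *
          (2 ^ |β - j| * v ^ (β - j))) := by
        gcongr
        nlinarith
    _ = |q| * 2 ^ a * (2 ^ |α - i| * 2 ^ |β - j|) * (1 - r) ^ a * (v ^ (α - i) * v ^ (β - j)) := by
        rw [mul_pow]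
        ring
    _ = |q| * 2 ^ a * 2 ^ (|α - i| + |β - j|) * ((1 - r) ^ a / v ^ (i + j)) * v ^ (α + β) := by
        rw [hvv, rpow_add two_pos]
        ring
    _ ≤ _ := by gcongr

theorem exists_abs_evalSum_le (k : ℕ) (L : List Term) (hL : ∀ e ∈ L, e.i + e.j + 1 ≤ k + e.a) :
    ∃ C, 0 ≤ C ∧ ∀ r s : ℝ, 0 ≤ r → r < 1 → 0 ≤ s → s ≤ 1 →
      |evalSum α β L r s| ≤ C * ((1 - r) / (1 - r) ^ k) * (1 - r ^ 2 + (1 - s)) ^ (α + β) := by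
  induction L with
  | nil => exact ⟨0, le_rfl, fun r s _ _ _ _ => by simp [evalSum]⟩
  | cons e L ih =>
    obtain ⟨C, hC, hCL⟩ := ih fun e' he' => hL e' (List.mem_cons_of_mem _ he')
    refine ⟨|e.coeff| * 2 ^ e.a * 2 ^ (|α - e.i| + |β - e.j|) + C, by positivity,
      fun r s hr₀ hr₁ hs₀ hs₁ => ?_⟩
    have hw : (1 - r) ^ e.a / (1 - r) ^ (e.i + e.j) ≤ (1 - r) / (1 - r) ^ k := by
      simpa only [pow_one] using
        pow_div_pow_le_pow_div_pow (c := 1) (by linarith) (by linarith) (hL e List.mem_cons_self)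
    have hv : 0 ≤ (1 - r ^ 2 + (1 - s)) ^ (α + β) := rpow_nonneg (by nlinarith) _
    rw [evalSum_cons]
    calc |e.eval α β r s + evalSum α β L r s|
        ≤ |e.eval α β r s| + |evalSum α β L r s| := abs_add_le _ _
      _ ≤ _ := add_le_add (e.abs_eval_le hr₀ hr₁ hs₀ hs₁) (hCL r s hr₀ hr₁ hs₀ hs₁)
      _ ≤ _ := by rw [add_mul, add_mul]; gcongr

theorem exists_abs_iterate_Rad_eta_le (n : ℕ) (hn : 2 ≤ n) (c : ℝ) (k : ℕ) :
    ∃ C, 0 ≤ C ∧ ∀ r s : ℝ, 0 ≤ r → r < 1 → s ∈ Ioo (0 : ℝ) 1 →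
      |Rad^[k] (fun ρ => eta n c ρ s) r| ≤ C * ((1 - r) / (1 - r) ^ k) *
        ((1 - s) ^ ((n : ℝ) / 2 - 2) * (1 - r ^ 2 + (1 - s)) ^ (2 - n + (n / 2 - 2) : ℝ)) := by
  obtain ⟨C, hC, hL⟩ := exists_abs_evalSum_le k _ fun e he =>
    add_one_le_of_mem_radTerms (α := 2 - n) (β := n / 2 - 2) (c := c) he
  refine ⟨C, hC, fun r s hr₀ hr₁ hs => ?_⟩
  have hs₁ : 0 ≤ 1 - s := by linarith [hs.2]
  have hsn : s ^ ((n : ℝ) / 2 - 1) ≤ 1 := by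
    have : (2 : ℝ) ≤ n := by exact_mod_cast hn
    exact rpow_le_one hs.1.le hs.2.le (by linarith)
  rw [eqOn_iterate_Rad_eta n c k (Ioo_subset_Icc_self hs) ⟨by linarith, hr₁⟩, abs_mul,
    abs_of_nonneg (mul_nonneg (rpow_nonneg hs₁ _) (rpow_nonneg hs.1.le _))]
  calc (1 - s) ^ ((n : ℝ) / 2 - 2) * s ^ ((n : ℝ) / 2 - 1) * |evalSum _ _ _ r s|
      ≤ (1 - s) ^ ((n : ℝ) / 2 - 2) * 1 *
          (C * ((1 - r) / (1 - r) ^ k) * (1 - r ^ 2 + (1 - s)) ^ (2 - n + (n / 2 - 2) : ℝ)) := by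
        gcongr
        exact hL r s hr₀ hr₁ hs.1.le hs.2.le
    _ = _ := by ring

end EtaKernel

theorem stmt8_general (n : ℕ) (hn : 3 ≤ n) (c : ℝ) (k : ℕ) :
    ∃ C : ℝ, ∀ r : ℝ, 0 ≤ r → r < 1 →
      (∫ s in Set.Ioo (0 : ℝ) 1, |Rad^[k] (fun ρ => eta n c ρ s) r|) ≤
        C / (1 - r) ^ k := by
  obtain ⟨κ, hκ_def⟩ : ∃ κ : ℝ, κ = n / 2 - 1 := ⟨_, rfl⟩
  have hκ : 0 < κ := by
    have : (3 : ℝ) ≤ n := by exact_mod_cast hn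
    linarith
  obtain ⟨C, hC, hbound⟩ := EtaKernel.exists_abs_iterate_Rad_eta_le n (by omega) c k
  rw [show (2 - n + (n / 2 - 2) : ℝ) = -(κ + 1) by rw [hκ_def]; ring,
    show (n : ℝ) / 2 - 2 = κ - 1 by rw [hκ_def]; ring] at hbound
  refine ⟨C / κ, fun r hr₀ hr₁ => ?_⟩
  have hδ : 0 < 1 - r ^ 2 := by nlinarith
  have ht : (1 + (1 - r ^ 2))⁻¹ ^ κ ≤ 1 :=
    rpow_le_one (by positivity) (inv_le_one_of_one_le₀ (by linarith)) hκ.le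
  calc ∫ s in Ioo 0 1, |Rad^[k] (fun ρ => eta n c ρ s) r|
      ≤ ∫ s in Ioo 0 1, C * ((1 - r) / (1 - r) ^ k) *
          ((1 - s) ^ (κ - 1) * (1 - r ^ 2 + (1 - s)) ^ (-(κ + 1))) :=
        integral_mono_of_nonneg (Eventually.of_forall fun _ => abs_nonneg _)
          (((integrableOn_one_sub_rpow_mul_rpow hκ hδ).mono_set
            Ioo_subset_Ioc_self).const_mul _)
          ((ae_restrict_iff' measurableSet_Ioo).2
            (Eventually.of_forall fun s hs => hbound r s hr₀ hr₁ hs))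
    _ = C / κ / (1 - r) ^ k * ((1 - r) * (1 + (1 - r ^ 2))⁻¹ ^ κ / (1 - r ^ 2)) := by
        rw [integral_const_mul, integral_one_sub_rpow_mul_rpow hκ hδ]
        field_simp
    _ ≤ C / κ / (1 - r) ^ k * 1 := by
        gcongr
        rw [div_le_one hδ]
        nlinarith
    _ = C / κ / (1 - r) ^ k := mul_one _

/-- For every k there is C_k with ∫₀¹ |(r ∂/∂r)^k η(r,s)| ds ≤ C_k (1-r)^{-k}. -/
theorem stmt8 (n : ℕ) (hn : 3 ≤ n) (c : ℝ) (hc : 0 < c) (k : ℕ) :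
    ∃ C : ℝ, ∀ r : ℝ, 0 ≤ r → r < 1 →
      (∫ s in Set.Ioo (0 : ℝ) 1, |Rad^[k] (fun ρ => eta n c ρ s) r|) ≤
        C / (1 - r) ^ k :=
  stmt8_general n hn c k
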